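/- arXiv:2004.05813 — 2 statements merged into one kernel-verified Lean document; each statement's English description precedes it below -/
import Mathlib

section
/- Let μ = Σ_{l=1}^{k₀} w_l N(y_l, I_d) be a mixture of k₀ ≤ k spherical Gaussians on ℝ^d whose weights satisfy w_l ≥ c/k for a constant c ∈ (0,1), and set η = 1/10. If n ≥ 1 + (k/c)·log⌈300k/η⌉·⌈log⌈(300k·log⌈300k/η⌉)/η⌉⌉ and x_1,…,x_n are i.i.d. samples from μ, then with probability at least 1 − η/100 every center is covered: {y_1,…,y_{k₀}} ⊆ ⋃_{l∈[n]} B₂(x_l, 2√d). -/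
open MeasureTheory Real ProbabilityTheory
open scoped ENNReal

/-- The spherical Gaussian measure `N(y, I_d)` on `ℝ^d` with mean `y` and identity covariance,
given by its density `γ(x - y) = (2π)^(-d/2) exp(-‖x-y‖²/2)` w.r.t. Lebesgue measure. -/
noncomputable def sphericalGaussian (d : ℕ) (y : EuclideanSpace ℝ (Fin d)) :
    Measure (EuclideanSpace ℝ (Fin d)) :=
  volume.withDensity fun x =>
    ENNReal.ofReal ((2 * π) ^ (-(d : ℝ) / 2) * Real.exp (-‖x - y‖ ^ 2 / 2))

/-! Every sample lands within `2√d` of a fixed center `y j` with probability at least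
`w j / 2 ≥ c / (2k)`: the moment generating function `E exp (t‖Z‖²) = (1 - 2t)^(-d/2)` of a
standard Gaussian `Z` and a Chernoff bound at `t = 3/8` leave mass at most
`2^d e^(-3d/2) ≤ 1/2` outside that ball. By independence all `n` samples miss a given center
with probability at most `(1 - c/(2k))^n ≤ exp (-cn/(2k))`, and the sample size makes
`cn/(2k) ≥ log ⌈3000k⌉`, so a union bound over the `k₀ ≤ k` centers leaves failure probability
at most `k/(3000k) ≤ 1/1000`. -/

open Metric

theorem lintegral_ofReal_exp_neg_mul_norm_sub_sq {V : Type*} [NormedAddCommGroup V]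
    [InnerProductSpace ℝ V] [FiniteDimensional ℝ V] [MeasurableSpace V] [BorelSpace V]
    {b : ℝ} (hb : 0 < b) (y : V) :
    ∫⁻ x, ENNReal.ofReal (exp (-b * ‖x - y‖ ^ 2)) =
      ENNReal.ofReal ((π / b) ^ (Module.finrank ℝ V / 2 : ℝ)) := by
  have h := GaussianFourier.integral_rexp_neg_mul_sq_norm (V := V) hb
  rw [lintegral_sub_right_eq_self (fun x => ENNReal.ofReal (exp (-b * ‖x‖ ^ 2))) y, ← h,
    ofReal_integral_eq_lintegral_ofReal (.of_integral_ne_zero (by rw [h]; positivity))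
      (.of_forall fun _ => (exp_pos _).le)]

theorem lintegral_ofReal_exp_mul_norm_sub_sq_sphericalGaussian (d : ℕ)
    (y : EuclideanSpace ℝ (Fin d)) {t : ℝ} (ht : t < 1 / 2) :
    ∫⁻ x, ENNReal.ofReal (exp (t * ‖x - y‖ ^ 2)) ∂sphericalGaussian d y =
      ENNReal.ofReal ((1 - 2 * t) ^ (-(d : ℝ) / 2)) := by
  have hb : 0 < 1 / 2 - t := by linarith
  rw [sphericalGaussian, lintegral_withDensity_eq_lintegral_mul _ (by fun_prop) (by fun_prop)]
  calc _ = ∫⁻ x, ENNReal.ofReal ((2 * π) ^ (-(d : ℝ) / 2)) *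
          ENNReal.ofReal (exp (-(1 / 2 - t) * ‖x - y‖ ^ 2)) := by
        refine lintegral_congr fun x => ?_
        rw [Pi.mul_apply, ← ENNReal.ofReal_mul (by positivity),
          ← ENNReal.ofReal_mul (by positivity), mul_assoc, ← exp_add]
        ring_nf
    _ = _ := by
      have h2π : 0 < 2 * π := by positivity
      have ht' : 0 < 1 - 2 * t := by linarith
      rw [lintegral_const_mul _ (by fun_prop), lintegral_ofReal_exp_neg_mul_norm_sub_sq hb,
        finrank_euclideanSpace_fin, ← ENNReal.ofReal_mul (rpow_nonneg h2π.le _),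
        show π / (1 / 2 - t) = 2 * π * (1 - 2 * t)⁻¹ by field_simp,
        mul_rpow h2π.le (inv_nonneg.2 ht'.le), inv_rpow ht'.le, neg_div, rpow_neg h2π.le,
        rpow_neg ht'.le, inv_mul_cancel_left₀ (rpow_pos_of_pos h2π _).ne']

instance isProbabilityMeasure_sphericalGaussian (d : ℕ) (y : EuclideanSpace ℝ (Fin d)) :
    IsProbabilityMeasure (sphericalGaussian d y) :=
  ⟨by simpa using
    lintegral_ofReal_exp_mul_norm_sub_sq_sphericalGaussian d y (t := 0) (by norm_num)⟩

theorem sphericalGaussian_closedBall_compl_le (d : ℕ) (y : EuclideanSpace ℝ (Fin d))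
    {t r : ℝ} (ht₀ : 0 ≤ t) (ht : t < 1 / 2) (hr : 0 ≤ r) :
    sphericalGaussian d y (closedBall y r)ᶜ ≤
      ENNReal.ofReal ((1 - 2 * t) ^ (-(d : ℝ) / 2) * exp (-t * r ^ 2)) := by
  have hsub : (closedBall y r)ᶜ ⊆
      {x | ENNReal.ofReal (exp (t * r ^ 2)) ≤ ENNReal.ofReal (exp (t * ‖x - y‖ ^ 2))} := by
    intro x hx
    have hrx : r ≤ ‖x - y‖ := (not_le.1 (mt mem_closedBall.2 hx)).le
    exact ENNReal.ofReal_le_ofReal (exp_le_exp.2 (by gcongr))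
  calc _ ≤ _ := measure_mono hsub
    _ ≤ (∫⁻ x, ENNReal.ofReal (exp (t * ‖x - y‖ ^ 2)) ∂sphericalGaussian d y) /
          ENNReal.ofReal (exp (t * r ^ 2)) :=
        meas_ge_le_lintegral_div (by fun_prop) (by simp [exp_pos]) ENNReal.ofReal_ne_top
    _ = _ := by
      rw [lintegral_ofReal_exp_mul_norm_sub_sq_sphericalGaussian d y ht,
        ← ENNReal.ofReal_div_of_pos (exp_pos _), div_eq_mul_inv, ← exp_neg, neg_mul]

theorem inv_two_le_sphericalGaussian_closedBall {d : ℕ} (hd : 1 ≤ d)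
    (y : EuclideanSpace ℝ (Fin d)) :
    2⁻¹ ≤ sphericalGaussian d y (closedBall y (2 * √d)) := by
  have htail := sphericalGaussian_closedBall_compl_le d y (t := 3 / 8) (r := 2 * √d)
    (by norm_num) (by norm_num) (by positivity)
  have hd' : (1 : ℝ) ≤ d := by exact_mod_cast hd
  have hlog4 : log (1 - 2 * (3 / 8)) = -(2 * log 2) := by
    rw [show (1 : ℝ) - 2 * (3 / 8) = (2 ^ 2)⁻¹ by norm_num, log_inv, log_pow]; push_cast; ring
  have hbound :
      (1 - 2 * (3 / 8) : ℝ) ^ (-(d : ℝ) / 2) * exp (-(3 / 8) * (2 * √d) ^ 2) ≤ 2⁻¹ := by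
    rw [rpow_def_of_pos (by norm_num), hlog4, ← exp_add, mul_pow, sq_sqrt (by positivity),
      show (2 : ℝ)⁻¹ = exp (-log 2) by rw [exp_neg, exp_log two_pos], exp_le_exp]
    nlinarith [log_two_lt_d9]
  have hcompl : sphericalGaussian d y (closedBall y (2 * √d))ᶜ ≤ 2⁻¹ :=
    htail.trans ((ENNReal.ofReal_le_ofReal hbound).trans_eq
      (by rw [ENNReal.ofReal_inv_of_pos two_pos, ENNReal.ofReal_ofNat]))
  rw [← compl_compl (closedBall y (2 * √d)),
    prob_compl_eq_one_sub measurableSet_closedBall.compl, ← ENNReal.one_sub_inv_two]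
  exact tsub_le_tsub_left hcompl 1

section Covering

variable {Ω α ι : Type*} [MeasurableSpace Ω] [MeasurableSpace α] {P : Measure Ω}
  [IsProbabilityMeasure P] [Fintype ι] {X : ι → Ω → α}

theorem measure_forall_notMem_le (hX : ∀ i, Measurable (X i)) (hind : iIndepFun X P)
    {S : Set α} (hS : MeasurableSet S) {q : ℝ≥0∞} (hq : ∀ i, q ≤ P (X i ⁻¹' S)) :
    P {ω | ∀ i, X i ω ∉ S} ≤ (1 - q) ^ Fintype.card ι := by
  have hset : {ω | ∀ i, X i ω ∉ S} = ⋂ i, X i ⁻¹' Sᶜ := by ext; simp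
  rw [hset, hind.meas_iInter fun i => ⟨Sᶜ, hS.compl, rfl⟩, ← Finset.card_univ,
    ← Finset.prod_const]
  refine Finset.prod_le_prod' fun i _ => ?_
  rw [Set.preimage_compl, prob_compl_eq_one_sub (hX i hS)]
  exact tsub_le_tsub_left (hq i) 1

theorem one_sub_card_mul_le_measure_forall_exists_mem {κ : Type*} [Fintype κ]
    (hX : ∀ i, Measurable (X i)) (hind : iIndepFun X P) {S : κ → Set α}
    (hS : ∀ j, MeasurableSet (S j)) {q : ℝ≥0∞} (hq : ∀ i j, q ≤ P (X i ⁻¹' S j)) :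
    1 - Fintype.card κ * (1 - q) ^ Fintype.card ι ≤ P {ω | ∀ j, ∃ i, X i ω ∈ S j} := by
  set G := {ω | ∀ j, ∃ i, X i ω ∈ S j}
  have hbad : Gᶜ = ⋃ j, {ω | ∀ i, X i ω ∉ S j} := by ext; simp [G]
  have hunion : P Gᶜ ≤ Fintype.card κ * (1 - q) ^ Fintype.card ι := by
    rw [hbad]
    refine (measure_iUnion_fintype_le P _).trans ?_
    simpa using Finset.sum_le_sum fun j (_ : j ∈ Finset.univ) =>
      measure_forall_notMem_le hX hind (hS j) fun i => hq i j
  have hcover : 1 ≤ P G + P Gᶜ := by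
    simpa [measure_univ] using measure_union_le (μ := P) G Gᶜ
  exact (tsub_le_tsub_left hunion 1).trans (tsub_le_iff_right.2 hcover)

end Covering

theorem mul_apply_le_sum_smul_apply {α ι : Type*} [MeasurableSpace α] [Fintype ι]
    (a : ι → ℝ≥0∞) (ν : ι → Measure α) (j : ι) (s : Set α) :
    a j * ν j s ≤ (∑ l, a l • ν l) s := by
  simpa using Finset.single_le_sum (f := fun l => a l * ν l s) (fun _ _ => zero_le)
    (Finset.mem_univ j)

theorem one_sub_ofReal_pow_le_ofReal_exp {t : ℝ} (ht : 0 ≤ t) (n : ℕ) :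
    (1 - ENNReal.ofReal t) ^ n ≤ ENNReal.ofReal (exp (-(t * n))) := by
  rw [← ENNReal.ofReal_one, ← ENNReal.ofReal_sub _ ht, show -(t * n) = n * -t by ring,
    exp_nat_mul, ENNReal.ofReal_pow (exp_pos _).le]
  gcongr
  linarith [add_one_le_exp (-t)]

theorem two_le_log_natCeil {x : ℝ} (hx : 8 ≤ x) : 2 ≤ log ⌈x⌉₊ := by
  rw [le_log_iff_exp_le (by positivity)]
  have he : exp 2 < 8 := by
    rw [show (2 : ℝ) = 1 + 1 by norm_num, exp_add]
    nlinarith [exp_one_lt_d9, exp_pos 1]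
  exact he.le.trans (hx.trans (Nat.le_ceil x))

theorem card_mul_exp_le_of_sample_size {k k₀ n : ℕ} (hk : 1 ≤ k) (hk₀k : k₀ ≤ k)
    {c : ℝ} (hc : 0 < c)
    (hn : (n : ℝ) ≥ 1 + ((k : ℝ) / c) * Real.log (⌈300 * (k : ℝ) / (1 / 10)⌉₊ : ℝ) *
        (⌈Real.log ((⌈(300 * (k : ℝ) * Real.log (⌈300 * (k : ℝ) / (1 / 10)⌉₊ : ℝ)) /
          (1 / 10)⌉₊ : ℝ))⌉₊ : ℝ)) :
    (k₀ : ℝ) * exp (-(c / (2 * k) * n)) ≤ 1 / 10 / 100 := by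
  have hk' : (1 : ℝ) ≤ k := by exact_mod_cast hk
  set A : ℝ := (⌈300 * (k : ℝ) / (1 / 10)⌉₊ : ℝ)
  set L := log A
  have hA : 3000 * k ≤ A :=
    (by ring : (3000 : ℝ) * k = 300 * k / (1 / 10)).trans_le (Nat.le_ceil _)
  have hL : 2 ≤ L := two_le_log_natCeil (by linarith)
  set M : ℝ := (⌈log ⌈300 * k * L / (1 / 10)⌉₊⌉₊ : ℝ)
  have hM : 2 ≤ M := (two_le_log_natCeil (by nlinarith)).trans (Nat.le_ceil _)
  have hLn : L ≤ c / (2 * k) * n := by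
    rw [div_mul_eq_mul_div, le_div_iff₀ (by positivity)]
    calc L * (2 * k) = k * L * 2 := by ring
      _ ≤ k * L * M := by gcongr
      _ = c * (k / c * L * M) := by field_simp
      _ ≤ c * n := by gcongr; linarith
  calc (k₀ : ℝ) * exp (-(c / (2 * k) * n)) ≤ k * exp (-L) := by
        gcongr
    _ = k / A := by rw [exp_neg, exp_log (by linarith), div_eq_mul_inv]
    _ ≤ 1 / 10 / 100 := by
        rw [div_le_iff₀ (by linarith)]
        linarith

theorem card_mul_one_sub_pow_le_of_sample_size {k k₀ n : ℕ} (hk : 1 ≤ k) (hk₀k : k₀ ≤ k)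
    {c : ℝ} (hc : 0 < c)
    (hn : (n : ℝ) ≥ 1 + ((k : ℝ) / c) * Real.log (⌈300 * (k : ℝ) / (1 / 10)⌉₊ : ℝ) *
        (⌈Real.log ((⌈(300 * (k : ℝ) * Real.log (⌈300 * (k : ℝ) / (1 / 10)⌉₊ : ℝ)) /
          (1 / 10)⌉₊ : ℝ))⌉₊ : ℝ)) :
    (k₀ : ℝ≥0∞) * (1 - ENNReal.ofReal (c / (2 * k))) ^ n ≤ (1 / 10 : ℝ≥0∞) / 100 :=
  calc (k₀ : ℝ≥0∞) * (1 - ENNReal.ofReal (c / (2 * k))) ^ n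
      ≤ k₀ * ENNReal.ofReal (exp (-(c / (2 * k) * n))) := by
        gcongr; exact one_sub_ofReal_pow_le_ofReal_exp (by positivity) n
    _ ≤ ENNReal.ofReal (1 / 10 / 100) := by
        rw [← ENNReal.ofReal_natCast, ← ENNReal.ofReal_mul (by positivity)]
        exact ENNReal.ofReal_le_ofReal (card_mul_exp_le_of_sample_size hk hk₀k hc hn)
    _ = (1 / 10 : ℝ≥0∞) / 100 := by
        rw [ENNReal.ofReal_div_of_pos (by norm_num), ENNReal.ofReal_div_of_pos (by norm_num)]
        simp

theorem centers_covered_by_sample_balls_general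
    {Ω : Type*} [MeasurableSpace Ω] (P : Measure Ω) [IsProbabilityMeasure P]
    (d k k₀ n : ℕ) (hd : 1 ≤ d) (hk : 1 ≤ k) (hk₀k : k₀ ≤ k)
    (c : ℝ) (hc : 0 < c)
    (y : Fin k₀ → EuclideanSpace ℝ (Fin d))
    (w : Fin k₀ → ℝ) (hw : ∀ l, c / k ≤ w l)
    (X : Fin n → Ω → EuclideanSpace ℝ (Fin d))
    (hmeas : ∀ i, Measurable (X i))
    (hiid : iIndepFun X P)
    (hlaw : ∀ i, Measure.map (X i) P =
      ∑ l : Fin k₀, ENNReal.ofReal (w l) • sphericalGaussian d (y l))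
    (hn : (n : ℝ) ≥ 1 + ((k : ℝ) / c) *
        Real.log (⌈300 * (k : ℝ) / (1 / 10)⌉₊ : ℝ) *
        (⌈Real.log
            ((⌈(300 * (k : ℝ) * Real.log (⌈300 * (k : ℝ) / (1 / 10)⌉₊ : ℝ)) / (1 / 10)⌉₊ : ℝ))⌉₊ :
          ℝ)) :
    P {ω | ∀ j : Fin k₀, ∃ l : Fin n, dist (y j) (X l ω) ≤ 2 * Real.sqrt d} ≥
      1 - (1 / 10 : ℝ≥0∞) / 100 := by
  set q := ENNReal.ofReal (c / (2 * k)) with hq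
  have hhit : ∀ i j, q ≤ P (X i ⁻¹' closedBall (y j) (2 * √d)) := fun i j => by
    rw [← Measure.map_apply (hmeas i) measurableSet_closedBall, hlaw i]
    calc q = ENNReal.ofReal (c / k) * 2⁻¹ := by
          rw [hq, ← ENNReal.ofReal_ofNat 2, ← ENNReal.ofReal_inv_of_pos two_pos,
            ← ENNReal.ofReal_mul (by positivity)]
          ring_nf
      _ ≤ ENNReal.ofReal (w j) * sphericalGaussian d (y j) (closedBall (y j) (2 * √d)) := by
          gcongr
          · exact hw j
          · exact inv_two_le_sphericalGaussian_closedBall hd (y j)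
      _ ≤ _ := mul_apply_le_sum_smul_apply _ _ j _
  calc 1 - (1 / 10 : ℝ≥0∞) / 100 ≤ 1 - k₀ * (1 - q) ^ n :=
        tsub_le_tsub_left (card_mul_one_sub_pow_le_of_sample_size hk hk₀k hc hn) 1
    _ ≤ P {ω | ∀ j, ∃ i, X i ω ∈ closedBall (y j) (2 * √d)} := by
      simpa using one_sub_card_mul_le_measure_forall_exists_mem hmeas hiid
        (fun j => measurableSet_closedBall) hhit
    _ = _ := by simp only [mem_closedBall']

/-- For a mixture `μ = Σ_{l=1}^{k₀} w_l N(y_l, I_d)` of `k₀ ≤ k` spherical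
Gaussians with `w_l ≥ c/k`, `c ∈ (0,1)`, `η = 1/10`, if
`n ≥ 1 + (k/c)·log⌈300k/η⌉·⌈log⌈(300k·log⌈300k/η⌉)/η⌉⌉` and `x₁,…,xₙ` are i.i.d. from `μ`,
then with probability ≥ `1 − η/100` every center lies in `⋃_l B₂(x_l, 2√d)`. -/
theorem centers_covered_by_sample_balls
    {Ω : Type*} [MeasurableSpace Ω] (P : Measure Ω) [IsProbabilityMeasure P]
    (d k k₀ n : ℕ) (hd : 1 ≤ d) (hk : 1 ≤ k) (hk₀ : 1 ≤ k₀) (hk₀k : k₀ ≤ k)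
    (c : ℝ) (hc : 0 < c) (hc1 : c < 1)
    (y : Fin k₀ → EuclideanSpace ℝ (Fin d))
    (w : Fin k₀ → ℝ) (hw : ∀ l, c / k ≤ w l) (hw1 : ∑ l, w l = 1)
    (X : Fin n → Ω → EuclideanSpace ℝ (Fin d))
    (hmeas : ∀ i, Measurable (X i))
    (hiid : iIndepFun X P)
    (hlaw : ∀ i, Measure.map (X i) P =
      ∑ l : Fin k₀, ENNReal.ofReal (w l) • sphericalGaussian d (y l))
    (hn : (n : ℝ) ≥ 1 + ((k : ℝ) / c) *
        Real.log (⌈300 * (k : ℝ) / (1 / 10)⌉₊ : ℝ) *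
        (⌈Real.log
            ((⌈(300 * (k : ℝ) * Real.log (⌈300 * (k : ℝ) / (1 / 10)⌉₊ : ℝ)) / (1 / 10)⌉₊ : ℝ))⌉₊ :
          ℝ)) :
    P {ω | ∀ j : Fin k₀, ∃ l : Fin n, dist (y j) (X l ω) ≤ 2 * Real.sqrt d} ≥
      1 - (1 / 10 : ℝ≥0∞) / 100 :=
  centers_covered_by_sample_balls_general P d k k₀ n hd hk hk₀k c hc y w hw X hmeas hiid hlaw hn
end

section
/- Let c ∈ (0,1) and let C₃.₂ be a sufficiently large universal constant. Let k, d ≥ 1 be integers, Δ̄ > 0, Δ = C₃.₂·Δ̄, and let y_1,…,y_{k₀} ∈ ℝ^d (k₀ ≤ k) satisfy ‖y_r − y_s‖₂ ≥ Δ√d for all r ≠ s, with weights w_r ≤ 1/(ck) for all r. Then for every j ∈ [k₀] and every x ∈ ℝ^d with ‖x − y_j‖₂ ≤ 3.2·Δ√d/(200·C₃.₂), one has Σ_{r ≠ j} w_r·e^{-‖x − y_r‖₂²/(2Δ̄²)} ≤ 10³¹/(c·k·d^{15}·C₃.₂³⁰). -/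
/-!
Packing argument. Put around every far centre `y r` the cube of half-side `a = C Δ̄ / 3`; by the
separation these cubes are disjoint. Since `x` is at distance at least `C Δ̄ √d / 2` from `y r`, on
the cube around `y r` the wide Gaussian `exp (-‖z - x‖² / (10 Δ̄²))` dominates
`exp (C² d / 40) · exp (-‖x - y r‖² / (2 Δ̄²))`. Integrating over the cubes, the sum times the cube
volume `(2a)^d` is at most the Gaussian integral `(10 π Δ̄²)^(d/2) ≤ (2a)^d`, so the sum is at most
`exp (-C² d / 40)`, which is below `10³¹ / (d¹⁵ C³⁰)` once `C ≥ 10⁴`.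
-/

open MeasureTheory Real Finset Metric

theorem exp_neg_le_factorial_div_pow {x : ℝ} (hx : 0 < x) (n : ℕ) :
    exp (-x) ≤ n.factorial / x ^ n := by
  rw [exp_neg, inv_le_comm₀ (exp_pos x) (by positivity), inv_div]
  exact pow_div_factorial_le_exp _ hx.le n

theorem exp_neg_sq_mul_div_forty_le {C : ℝ} (hC : 10 ^ 4 ≤ C) {d : ℕ} (hd : 1 ≤ d) :
    exp (-(C ^ 2 * d / 40)) ≤ 10 ^ 31 / ((d : ℝ) ^ 15 * C ^ 30) := by
  have hd : (1 : ℝ) ≤ d := by exact_mod_cast hd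
  -- `exp (-t) ≤ 16! / t ^ 16` at `t = C² d / 40`, and `16! · 40¹⁶ < 10³⁹ ≤ 10³¹ C² d`.
  have hfact : ((16).factorial : ℝ) ≤ 10 ^ 31 * C ^ 2 * d / 40 ^ 16 := by
    have hC2 : (10 : ℝ) ^ 8 ≤ C ^ 2 := by nlinarith
    rw [le_div_iff₀ (by positivity)]
    norm_num [Nat.factorial]
    nlinarith
  calc exp (-(C ^ 2 * d / 40)) ≤ (16).factorial / (C ^ 2 * d / 40) ^ 16 :=
        exp_neg_le_factorial_div_pow (by positivity) 16
    _ ≤ 10 ^ 31 / ((d : ℝ) ^ 15 * C ^ 30) := by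
        rw [div_le_div_iff₀ (by positivity) (by positivity)]
        calc ((16).factorial : ℝ) * (d ^ 15 * C ^ 30)
            ≤ 10 ^ 31 * C ^ 2 * d / 40 ^ 16 * (d ^ 15 * C ^ 30) := by gcongr
          _ = 10 ^ 31 * (C ^ 2 * d / 40) ^ 16 := by ring

theorem sum_mul_measureReal_le_integral {α κ : Type*} [MeasurableSpace α] {μ : Measure α}
    {s : Finset κ} {Q : κ → Set α} {f : α → ℝ} {m : κ → ℝ}
    (hQ : ∀ r ∈ s, MeasurableSet (Q r)) (hQ_fin : ∀ r ∈ s, μ (Q r) ≠ ⊤)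
    (hQ_disj : (s : Set κ).PairwiseDisjoint Q) (hf : Integrable f μ) (hf0 : 0 ≤ f)
    (hm : ∀ r ∈ s, ∀ z ∈ Q r, m r ≤ f z) :
    ∑ r ∈ s, m r * μ.real (Q r) ≤ ∫ z, f z ∂μ :=
  calc ∑ r ∈ s, m r * μ.real (Q r) ≤ ∑ r ∈ s, ∫ z in Q r, f z ∂μ :=
        sum_le_sum fun r hr ↦
          setIntegral_ge_of_const_le_real (hQ r hr) (hQ_fin r hr) (hm r hr) hf.integrableOn
    _ = ∫ z in ⋃ r ∈ s, Q r, f z ∂μ :=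
        (integral_biUnion_finset s hQ hQ_disj fun _ _ ↦ hf.integrableOn).symm
    _ ≤ ∫ z, f z ∂μ := setIntegral_le_integral hf (.of_forall hf0)

section Gaussian

variable {V : Type*} [NormedAddCommGroup V] [InnerProductSpace ℝ V] [FiniteDimensional ℝ V]
  [MeasurableSpace V] [BorelSpace V]

theorem integral_exp_neg_mul_sq_norm_sub {b : ℝ} (hb : 0 < b) (x : V) :
    ∫ z, exp (-b * ‖z - x‖ ^ 2) = (π / b) ^ (Module.finrank ℝ V / 2 : ℝ) := by
  rw [integral_sub_right_eq_self (fun z ↦ exp (-b * ‖z‖ ^ 2)) x,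
    GaussianFourier.integral_rexp_neg_mul_sq_norm hb]

theorem integrable_exp_neg_mul_sq_norm_sub {b : ℝ} (hb : 0 < b) (x : V) :
    Integrable fun z ↦ exp (-b * ‖z - x‖ ^ 2) :=
  .of_integral_ne_zero (by rw [integral_exp_neg_mul_sq_norm_sub hb]; positivity)

end Gaussian

theorem rpow_half_le_pow {t u : ℝ} (ht : 0 ≤ t) (hu : 0 ≤ u) (h : t ≤ u ^ 2) (n : ℕ) :
    t ^ (n / 2 : ℝ) ≤ u ^ n :=
  calc t ^ (n / 2 : ℝ) ≤ (u ^ 2) ^ (n / 2 : ℝ) := by gcongr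
    _ = u ^ n := by
      rw [← rpow_natCast u 2, ← rpow_mul hu, ← rpow_natCast]
      congr 1
      push_cast
      ring

section Cube

variable {ι : Type*} [Fintype ι]

def cube (p : EuclideanSpace ℝ ι) (a : ℝ) : Set (EuclideanSpace ℝ ι) :=
  WithLp.ofLp ⁻¹' closedBall (WithLp.ofLp p) a

theorem measurableSet_cube (p : EuclideanSpace ℝ ι) (a : ℝ) : MeasurableSet (cube p a) :=
  (PiLp.volume_preserving_ofLp ι).measurable measurableSet_closedBall

theorem volume_cube (p : EuclideanSpace ℝ ι) {a : ℝ} (ha : 0 ≤ a) :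
    volume (cube p a) = ENNReal.ofReal ((2 * a) ^ Fintype.card ι) := by
  rw [cube, (PiLp.volume_preserving_ofLp ι).measure_preimage
    measurableSet_closedBall.nullMeasurableSet, Real.volume_pi_closedBall _ ha]

theorem dist_le_of_mem_cube {p z : EuclideanSpace ℝ ι} {a : ℝ} (ha : 0 ≤ a) (hz : z ∈ cube p a) :
    dist z p ≤ a * √(Fintype.card ι) := by
  rw [cube, Set.mem_preimage, mem_closedBall, dist_pi_le_iff ha] at hz
  rw [EuclideanSpace.dist_eq]
  calc √(∑ i, dist (z i) (p i) ^ 2) ≤ √(∑ _i : ι, a ^ 2) := by gcongr with i; exact hz i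
    _ = a * √(Fintype.card ι) := by
      rw [sum_const, card_univ, nsmul_eq_mul, sqrt_mul (Nat.cast_nonneg _), sqrt_sq ha, mul_comm]

theorem pairwiseDisjoint_cube {κ : Type*} {s : Set κ} {y : κ → EuclideanSpace ℝ ι} {a : ℝ}
    (ha : 0 ≤ a) (hsep : s.Pairwise fun r r' ↦ 2 * a * √(Fintype.card ι) < dist (y r) (y r')) :
    s.PairwiseDisjoint fun r ↦ cube (y r) a := by
  intro r hr r' hr' hne
  refine Set.disjoint_left.2 fun z hz hz' ↦ (hsep hr hr' hne).not_ge ?_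
  calc dist (y r) (y r') ≤ dist z (y r) + dist z (y r') := dist_triangle_left _ _ _
    _ ≤ 2 * a * √(Fintype.card ι) := by
      linarith [dist_le_of_mem_cube ha hz, dist_le_of_mem_cube ha hz']

end Cube

theorem sum_exp_neg_sq_dist_le {d : ℕ} (hd : 0 < d) {C σ : ℝ} (hC : 9 ≤ C) (hσ : 0 < σ)
    {κ : Type*} {s : Finset κ} {y : κ → EuclideanSpace ℝ (Fin d)} {x : EuclideanSpace ℝ (Fin d)}
    (hsep : (s : Set κ).Pairwise fun r r' ↦ C * σ * √d ≤ dist (y r) (y r'))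
    (hfar : ∀ r ∈ s, C * σ * √d / 2 ≤ dist x (y r)) :
    ∑ r ∈ s, exp (-dist x (y r) ^ 2 / (2 * σ ^ 2)) ≤ exp (-(C ^ 2 * d / 40)) := by
  set a := C * σ / 3 with ha_def
  set b := (10 * σ ^ 2)⁻¹ with hb_def
  have ha : 0 < a := by positivity
  have hb : 0 < b := by positivity
  have ha_sd : a * √d = C * σ * √d / 3 := by rw [ha_def]; ring
  have hvol : ∀ r, volume.real (cube (y r) a) = (2 * a) ^ d := fun r ↦ by
    rw [measureReal_def, volume_cube _ ha.le, Fintype.card_fin,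
      ENNReal.toReal_ofReal (by positivity)]
  have hdisj : (s : Set κ).PairwiseDisjoint fun r ↦ cube (y r) a := by
    refine pairwiseDisjoint_cube ha.le fun r hr r' hr' hne ↦ lt_of_lt_of_le ?_ (hsep hr hr' hne)
    have : 0 < C * σ * √d := by positivity
    rw [Fintype.card_fin]
    linarith
  have hpoint : ∀ r ∈ s, ∀ z ∈ cube (y r) a,
      exp (C ^ 2 * d / 40) * exp (-dist x (y r) ^ 2 / (2 * σ ^ 2)) ≤ exp (-b * ‖z - x‖ ^ 2) := by
    intro r hr z hz
    have hzr : dist z (y r) ≤ a * √d := by simpa using dist_le_of_mem_cube ha.le hz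
    have hzx : ‖z - x‖ ≤ 5 / 3 * dist x (y r) := by
      rw [← dist_eq_norm]
      linarith [dist_triangle z (y r) x, dist_comm (y r) x, hfar r hr]
    have hfar_sq : C ^ 2 * σ ^ 2 * d ≤ 4 * dist x (y r) ^ 2 := by
      have := pow_le_pow_left₀ (by positivity) (hfar r hr) 2
      rw [div_pow, mul_pow, sq_sqrt (Nat.cast_nonneg d)] at this
      linarith
    have hzx_sq : ‖z - x‖ ^ 2 ≤ 25 / 9 * dist x (y r) ^ 2 := by
      nlinarith [pow_le_pow_left₀ (norm_nonneg _) hzx 2]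
    rw [← exp_add, exp_le_exp, hb_def]
    -- cleared of denominators this is `C² σ² d + 4 ‖z - x‖² ≤ 20 ‖x - y r‖²`
    field_simp
    nlinarith
  have hgauss : ∫ z, exp (-b * ‖z - x‖ ^ 2) ≤ (2 * a) ^ d := by
    rw [integral_exp_neg_mul_sq_norm_sub hb, finrank_euclideanSpace_fin]
    refine rpow_half_le_pow (by positivity) (by positivity) ?_ d
    calc π / b = 10 * π * σ ^ 2 := by rw [hb_def, div_inv_eq_mul]; ring
      _ ≤ 4 * C ^ 2 / 9 * σ ^ 2 := by gcongr; nlinarith [pi_lt_d2]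
      _ = (2 * a) ^ 2 := by rw [ha_def]; ring
  have hpack := sum_mul_measureReal_le_integral (fun r _ ↦ measurableSet_cube (y r) a)
    (fun r _ ↦ by rw [volume_cube _ ha.le]; exact ENNReal.ofReal_ne_top) hdisj
    (integrable_exp_neg_mul_sq_norm_sub hb x) (fun _ ↦ (exp_pos _).le) hpoint
  simp only [hvol, ← sum_mul, ← mul_sum] at hpack
  have := le_of_mul_le_mul_right (hpack.trans (hgauss.trans_eq (one_mul _).symm)) (by positivity)
  rwa [exp_neg, ← mul_one (exp _)⁻¹, le_inv_mul_iff₀ (exp_pos _)]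

/-- For `c ∈ (0,1)` and a sufficiently large universal constant `C₃.₂`, with
`Δ = C₃.₂·Δ̄` and centers `y_r` at pairwise distance ≥ `Δ√d` and weights `w_r ≤ 1/(ck)`: for any
`j` and any `x` with `‖x − y_j‖ ≤ 3.2·Δ√d/(200·C₃.₂)`,
`Σ_{r ≠ j} w_r·e^(-‖x − y_r‖²/(2Δ̄²)) ≤ 10³¹/(c·k·d¹⁵·C₃.₂³⁰)`. -/
theorem far_centers_contribution_small :
    ∃ C₃₂₀ : ℝ, ∀ C₃₂ : ℝ, C₃₂₀ ≤ C₃₂ →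
      ∀ (c : ℝ), 0 < c → c < 1 →
        ∀ (k d k₀ : ℕ), 1 ≤ k → 1 ≤ d → 1 ≤ k₀ → k₀ ≤ k →
          ∀ (Δb : ℝ), 0 < Δb →
            ∀ (y : Fin k₀ → EuclideanSpace ℝ (Fin d)) (w : Fin k₀ → ℝ),
              (∀ r, 0 ≤ w r) → (∀ r, w r ≤ 1 / (c * k)) →
                (∀ r r' : Fin k₀, r ≠ r' → C₃₂ * Δb * Real.sqrt d ≤ dist (y r) (y r')) →
                  ∀ (j : Fin k₀) (x : EuclideanSpace ℝ (Fin d)),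
                    dist x (y j) ≤ 3.2 * (C₃₂ * Δb) * Real.sqrt d / (200 * C₃₂) →
                      ∑ r ∈ Finset.univ.erase j,
                          w r * Real.exp (-(dist x (y r)) ^ 2 / (2 * Δb ^ 2)) ≤
                        10 ^ 31 / (c * k * (d : ℝ) ^ 15 * C₃₂ ^ 30) := by
  refine ⟨10 ^ 4, fun C hC c hc _ k d k₀ _ hd _ _ Δb hΔb y w _ hw hsep j x hx ↦ ?_⟩
  have hC9 : 9 ≤ C := le_trans (by norm_num) hC
  have hxj : dist x (y j) ≤ C * Δb * √d / 2 := by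
    have : 0 ≤ Δb * √d := by positivity
    calc dist x (y j) ≤ 2 / 125 * (Δb * √d) := hx.trans_eq (by field_simp; ring)
      _ ≤ C * Δb * √d / 2 := by nlinarith
  have hfar : ∀ r ∈ univ.erase j, C * Δb * √d / 2 ≤ dist x (y r) := fun r hr ↦ by
    linarith [hsep j r (ne_of_mem_erase hr).symm, dist_triangle_left (y j) (y r) x]
  calc ∑ r ∈ univ.erase j, w r * exp (-dist x (y r) ^ 2 / (2 * Δb ^ 2))
      ≤ ∑ r ∈ univ.erase j, 1 / (c * k) * exp (-dist x (y r) ^ 2 / (2 * Δb ^ 2)) := by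
        gcongr with r; exact hw r
    _ ≤ 1 / (c * k) * exp (-(C ^ 2 * d / 40)) := by
        rw [← mul_sum]
        gcongr
        exact sum_exp_neg_sq_dist_le hd hC9 hΔb (fun r _ r' _ ↦ hsep r r') hfar
    _ ≤ 1 / (c * k) * (10 ^ 31 / ((d : ℝ) ^ 15 * C ^ 30)) := by
        gcongr; exact exp_neg_sq_mul_div_forty_le hC hd
    _ = 10 ^ 31 / (c * k * (d : ℝ) ^ 15 * C ^ 30) := by ring
end
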